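/- Let x1, x2, x3, x5, x6 be real numbers each in the interval (1, 2]. Then x2·x3 + x5·x6 + x1·x2·x5 + x1·x3·x6 − 2·x1² + 2 > 0; consequently the quantity ψ = (x2·x3 + x5·x6 + x1·x2·x5 + x1·x3·x6 − 2·x1² + 2) / (√(2·x1·x2·x6 + x1² + x2² + x6² − 1) · √(2·x1·x3·x5 + x1² + x3² + x5² − 1)) is strictly positive. -/
import Mathlib


/-- positivity of the cosine of the dihedral angle at the edge e12
of a 4-0 type hyper-ideal tetrahedron whose edge opposite to e12 has cosh-length 2. -/
theorem stmt_18 (x1 x2 x3 x5 x6 : ℝ)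
    (h1 : 1 < x1 ∧ x1 ≤ 2) (h2 : 1 < x2 ∧ x2 ≤ 2) (h3 : 1 < x3 ∧ x3 ≤ 2)
    (h5 : 1 < x5 ∧ x5 ≤ 2) (h6 : 1 < x6 ∧ x6 ≤ 2) :
    0 < x2 * x3 + x5 * x6 + x1 * x2 * x5 + x1 * x3 * x6 - 2 * x1 ^ 2 + 2 ∧
    0 < (x2 * x3 + x5 * x6 + x1 * x2 * x5 + x1 * x3 * x6 - 2 * x1 ^ 2 + 2) /
      (Real.sqrt (2 * x1 * x2 * x6 + x1 ^ 2 + x2 ^ 2 + x6 ^ 2 - 1) *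
        Real.sqrt (2 * x1 * x3 * x5 + x1 ^ 2 + x3 ^ 2 + x5 ^ 2 - 1)) := by
  obtain ⟨a1, b1⟩ := h1
  obtain ⟨a2, b2⟩ := h2
  obtain ⟨a3, b3⟩ := h3
  obtain ⟨a5, b5⟩ := h5
  obtain ⟨a6, b6⟩ := h6
  have hnum : 0 < x2 * x3 + x5 * x6 + x1 * x2 * x5 + x1 * x3 * x6 - 2 * x1 ^ 2 + 2 := by
    nlinarith [mul_pos (sub_pos.2 a2) (sub_pos.2 a3), mul_pos (sub_pos.2 a5) (sub_pos.2 a6),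
      sq_nonneg (x1 - 2), mul_pos (sub_pos.2 a2) (sub_pos.2 a5),
      mul_pos (sub_pos.2 a3) (sub_pos.2 a6)]
  refine ⟨hnum, div_pos hnum (mul_pos ?_ ?_)⟩
  · apply Real.sqrt_pos.2; nlinarith [mul_pos (mul_pos (lt_trans one_pos a1) (lt_trans one_pos a2)) (lt_trans one_pos a6), mul_pos (mul_pos (lt_trans one_pos a1) (lt_trans one_pos a3)) (lt_trans one_pos a5), sq_nonneg x1]
  · apply Real.sqrt_pos.2; nlinarith [mul_pos (mul_pos (lt_trans one_pos a1) (lt_trans one_pos a2)) (lt_trans one_pos a6), mul_pos (mul_pos (lt_trans one_pos a1) (lt_trans one_pos a3)) (lt_trans one_pos a5), sq_nonneg x1]
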